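/- arXiv:2312.03822 — 3 statements merged into one kernel-verified Lean document; each statement's English description precedes it below -/
import Mathlib

section
/- For every real R > 0 and every integer m ≥ 1, the sum over all tuples (k_1, …, k_m) of nonnegative integers with k_1 + 2k_2 + ⋯ + m·k_m = m of R^{k_1+⋯+k_m}·(k_1+⋯+k_m)!/(k_1!⋯k_m!) is at most R·(R+1)^{m−1}. -/
/-!
Grouping the tuples `k` by `j = ∑ kᵢ`, the multinomial theorem identifies the `j`-th group with
`R ^ j` times the coefficient of `X ^ m` in `(X + X ^ 2 + ⋯ + X ^ m) ^ j`. Up to order `m` this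
power agrees with `(X / (1 - X)) ^ j`, whose `m`-th coefficient is `(m - 1).choose (j - 1)`, so the
sum equals `∑ⱼ R ^ j * (m - 1).choose (j - 1) = R * (R + 1) ^ (m - 1)` exactly.
-/

open Finset PowerSeries

section PowerSeries

variable {S : Type*}

lemma coeff_sum_X_pow_succ_pow_eq_sum_multinomial [CommSemiring S] (n j m : ℕ) :
    coeff m ((∑ i : Fin n, (X : S⟦X⟧) ^ (i.1 + 1)) ^ j) =
      ∑ k ∈ (piAntidiag univ j).filter (fun k => ∑ i : Fin n, (i.1 + 1) * k i = m),
        (Nat.multinomial univ k : S) := by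
  rw [sum_pow_eq_sum_piAntidiag, map_sum, sum_filter]
  refine sum_congr rfl fun k _ => ?_
  have hprod : ∏ i : Fin n, ((X : S⟦X⟧) ^ (i.1 + 1)) ^ k i =
      X ^ ∑ i : Fin n, (i.1 + 1) * k i := by
    simp only [← pow_mul, prod_pow_eq_pow_sum]
  rw [hprod, ← map_natCast (C (R := S)), coeff_C_mul_X_pow]
  exact if_congr eq_comm rfl rfl

lemma X_pow_dvd_mk_one_sub_geom_sum [CommRing S] (n : ℕ) :
    (X : S⟦X⟧) ^ n ∣ PowerSeries.mk 1 - ∑ i ∈ range n, X ^ i := by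
  refine ⟨PowerSeries.mk 1, ?_⟩
  linear_combination (∑ i ∈ range n, (X : S⟦X⟧) ^ i) * mk_one_mul_one_sub_eq_one (S := S) -
    PowerSeries.mk 1 * mul_neg_geom_sum (X : S⟦X⟧) n

lemma coeff_sum_X_pow_succ_pow_eq_choose [CommRing S] {n d m : ℕ} (hdm : d < m)
    (hmn : m ≤ n) :
    coeff m ((∑ i : Fin n, (X : S⟦X⟧) ^ (i.1 + 1)) ^ (d + 1)) = (m - 1).choose d := by
  have hsum : ∑ i : Fin n, (X : S⟦X⟧) ^ (i.1 + 1) = X * ∑ i ∈ range n, X ^ i := by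
    rw [mul_sum, ← Fin.sum_univ_eq_sum_range]
    simp only [pow_succ']
  have hcoeff : coeff (m - (d + 1)) ((∑ i ∈ range n, (X : S⟦X⟧) ^ i) ^ (d + 1)) =
      coeff (m - (d + 1)) ((PowerSeries.mk 1 : S⟦X⟧) ^ (d + 1)) := by
    -- `X ^ n` divides the difference of the two `(d + 1)`-st powers, and `m - (d + 1) < n`.
    obtain ⟨q, hq⟩ := (X_pow_dvd_mk_one_sub_geom_sum (S := S) n).trans
      (sub_dvd_pow_sub_pow _ _ (d + 1))
    rw [← sub_eq_zero, ← map_sub, ← neg_sub, map_neg, hq, coeff_X_pow_mul', if_neg (by omega),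
      neg_zero]
  rw [hsum, mul_pow, coeff_X_pow_mul', if_pos (by omega), hcoeff, mk_one_pow_eq_mk_choose_add,
    coeff_mk]
  congr 2
  omega

end PowerSeries

lemma mem_piFinset_range_of_sum_mul_eq {n m : ℕ} {k : Fin n → ℕ}
    (hk : ∑ i : Fin n, (i.1 + 1) * k i = m) :
    k ∈ Fintype.piFinset fun _ : Fin n => range (m + 1) := by
  refine Fintype.mem_piFinset.2 fun i => mem_range_succ_iff.2 ?_
  calc k i ≤ (i.1 + 1) * k i := Nat.le_mul_of_pos_left _ i.1.succ_pos
    _ ≤ ∑ i : Fin n, (i.1 + 1) * k i := single_le_sum (f := fun i : Fin n => (i.1 + 1) * k i)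
      (fun _ _ => Nat.zero_le _) (mem_univ i)
    _ = m := hk

lemma sum_le_of_sum_mul_eq {n m : ℕ} {k : Fin n → ℕ}
    (hk : ∑ i : Fin n, (i.1 + 1) * k i = m) :
    ∑ i : Fin n, k i ≤ m :=
  hk ▸ sum_le_sum fun i _ => Nat.le_mul_of_pos_left _ i.1.succ_pos

section Field

variable {K : Type*} [Field K] [CharZero K]

lemma factorial_sum_div_prod_factorial_eq_multinomial {ι : Type*} (s : Finset ι)
    (k : ι → ℕ) :
    ((∑ i ∈ s, k i).factorial : K) / ∏ i ∈ s, ((k i).factorial : K) =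
      Nat.multinomial s k := by
  rw [div_eq_iff (prod_ne_zero_iff.2 fun i _ => Nat.cast_ne_zero.2 (Nat.factorial_ne_zero _)),
    ← Nat.multinomial_spec s k]
  push_cast
  ring

lemma sum_weighted_multinomial_eq_sum_coeff (R : K) (n m : ℕ) :
    ∑ k ∈ (Fintype.piFinset fun _ : Fin n => range (m + 1)).filter
        (fun k => ∑ i : Fin n, (i.1 + 1) * k i = m),
      R ^ (∑ i : Fin n, k i) * ((∑ i : Fin n, k i).factorial : K) /
        ∏ i : Fin n, ((k i).factorial : K) =
      ∑ j ∈ range (m + 1),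
        R ^ j * coeff m ((∑ i : Fin n, (X : K⟦X⟧) ^ (i.1 + 1)) ^ j) := by
  have hmaps : ∀ k ∈ (Fintype.piFinset fun _ : Fin n => range (m + 1)).filter
      (fun k => ∑ i : Fin n, (i.1 + 1) * k i = m), ∑ i : Fin n, k i ∈ range (m + 1) :=
    fun _ hk => mem_range_succ_iff.2 (sum_le_of_sum_mul_eq (mem_filter.1 hk).2)
  rw [← sum_fiberwise_of_maps_to hmaps]
  refine sum_congr rfl fun j _ => ?_
  have hfiber : ((Fintype.piFinset fun _ : Fin n => range (m + 1)).filter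
        (fun k => ∑ i : Fin n, (i.1 + 1) * k i = m)).filter (fun k => ∑ i : Fin n, k i = j) =
      (piAntidiag univ j).filter (fun k => ∑ i : Fin n, (i.1 + 1) * k i = m) := by
    ext k
    simp only [mem_filter, mem_piAntidiag, mem_univ, implies_true, and_true]
    exact ⟨fun h => ⟨h.2, h.1.2⟩,
      fun h => ⟨⟨mem_piFinset_range_of_sum_mul_eq h.2, h.2⟩, h.1⟩⟩
  rw [hfiber, coeff_sum_X_pow_succ_pow_eq_sum_multinomial, mul_sum]
  refine sum_congr rfl fun k hk => ?_
  rw [mul_div_assoc, factorial_sum_div_prod_factorial_eq_multinomial,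
    (mem_piAntidiag.1 (mem_filter.1 hk).1).1]

lemma sum_weighted_multinomial_eq (R : K) {m : ℕ} (hm : 1 ≤ m) :
    ∑ k ∈ (Fintype.piFinset fun _ : Fin m => range (m + 1)).filter
        (fun k => ∑ i : Fin m, (i.1 + 1) * k i = m),
      R ^ (∑ i : Fin m, k i) * ((∑ i : Fin m, k i).factorial : K) /
        ∏ i : Fin m, ((k i).factorial : K) = R * (R + 1) ^ (m - 1) := by
  obtain ⟨m, rfl⟩ := Nat.exists_eq_add_of_le' hm
  rw [sum_weighted_multinomial_eq_sum_coeff, sum_range_succ', pow_zero, pow_zero, coeff_one,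
    if_neg m.succ_ne_zero, mul_zero, add_zero, Nat.add_sub_cancel, add_pow, mul_sum]
  refine sum_congr rfl fun d hd => ?_
  rw [coeff_sum_X_pow_succ_pow_eq_choose (by simpa using hd) le_rfl, Nat.add_sub_cancel]
  ring

end Field

theorem stmt5_general (R : ℝ) (m : ℕ) (hm : 1 ≤ m) :
    ∑ k ∈ (Fintype.piFinset fun _ : Fin m => Finset.range (m + 1)).filter
        (fun k => ∑ i : Fin m, (i.1 + 1) * k i = m),
      R ^ (∑ i : Fin m, k i) * ((∑ i : Fin m, k i).factorial : ℝ) /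
        ∏ i : Fin m, ((k i).factorial : ℝ)
      ≤ R * (R + 1) ^ (m - 1) :=
  (sum_weighted_multinomial_eq R hm).le

theorem stmt5 (R : ℝ) (hR : 0 < R) (m : ℕ) (hm : 1 ≤ m) :
    ∑ k ∈ (Fintype.piFinset fun _ : Fin m => Finset.range (m + 1)).filter
        (fun k => ∑ i : Fin m, (i.1 + 1) * k i = m),
      R ^ (∑ i : Fin m, k i) * ((∑ i : Fin m, k i).factorial : ℝ) /
        ∏ i : Fin m, ((k i).factorial : ℝ)
      ≤ R * (R + 1) ^ (m - 1) :=
  stmt5_general R m hm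
end

section
/- Let (α, β) ∈ ℝ^N × ℝ^N and let ω be a weight function. The pair (α, β) satisfies condition (EDC)₂^{ω} (for every ε > 0 there is C_ε > 0 with |τ + ⟨ξ, α + iβ⟩| ≥ C_ε exp(−ε ω(|(τ,ξ)|)) for all (τ,ξ) ∈ ℤ^{N+1} with τ + ⟨ξ, α+iβ⟩ ≠ 0) if and only if for every ε > 0 there exists C_ε > 0 such that |1 − e^{−2πi⟨ξ, α+iβ⟩}| ≥ C_ε e^{−ε ω(|ξ|)} for all ξ ∈ ℤ^N with ⟨ξ, α+iβ⟩ ∉ ℤ. -/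
open Real Complex

/-! Since `w ↦ e^{-2πiw}` is `1`-periodic, `1 - e^{-2πi z}` only depends on `w = τ + z` for any
`τ ∈ ℤ`. On the compact rectangle `|Re w| ≤ 1/2`, `|Im w| ≤ 1` its only zero is the simple zero
`w = 0`, so there `|1 - e^{-2πi w}|` is comparable to `|w|`, while for `|Im w| ≥ 1` it is at least
`1/2`. With `|⟨ξ, α + iβ⟩| ≤ M |ξ|`, choosing `τ` nearest to `-Re ⟨ξ, α + iβ⟩` gives
`|τ| + |ξ| ≤ (n + 1) |ξ| + 1` for `n = ⌈M⌉`, and subadditivity of `ω` bounds `ω(|τ| + |ξ|)` by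
`(n + 1) ω(|ξ|) + ω(1)`; the factor `n + 1` is absorbed by shrinking `ε`. -/

section DSlope

variable {𝕜 E : Type*} [NontriviallyNormedField 𝕜] [NormedAddCommGroup E] [NormedSpace 𝕜 E]
  {f : 𝕜 → E} {K : Set 𝕜}

lemma norm_eq_norm_mul_norm_dslope_zero (hf0 : f 0 = 0) (w : 𝕜) :
    ‖f w‖ = ‖w‖ * ‖dslope f 0 w‖ := by
  have h := sub_smul_dslope f 0 w
  rw [sub_zero, hf0, sub_zero] at h
  rw [← h, norm_smul]

lemma continuous_dslope {a : 𝕜} (hf : Continuous f) (hd : DifferentiableAt 𝕜 f a) :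
    Continuous (dslope f a) :=
  continuousOn_univ.1 ((continuousOn_dslope Filter.univ_mem).2 ⟨hf.continuousOn, hd⟩)

lemma IsCompact.exists_pos_norm_le_mul_norm (hK : IsCompact K) (hf : Continuous f)
    (hd : DifferentiableAt 𝕜 f 0) (hf0 : f 0 = 0) :
    ∃ C > 0, ∀ w ∈ K, ‖f w‖ ≤ C * ‖w‖ := by
  obtain ⟨C, hC⟩ := hK.exists_bound_of_continuousOn (continuous_dslope hf hd).continuousOn
  refine ⟨max C 1, by positivity, fun w hw => ?_⟩
  rw [norm_eq_norm_mul_norm_dslope_zero hf0, mul_comm]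
  gcongr
  exact (hC w hw).trans (le_max_left _ _)

lemma IsCompact.exists_pos_mul_norm_le {f' : E} (hK : IsCompact K) (hf : Continuous f)
    (hd : HasDerivAt f f' 0) (hf' : f' ≠ 0) (hf0 : f 0 = 0)
    (hzero : ∀ w ∈ K, f w = 0 → w = 0) :
    ∃ c > 0, ∀ w ∈ K, c * ‖w‖ ≤ ‖f w‖ := by
  rcases K.eq_empty_or_nonempty with rfl | hne
  · exact ⟨1, one_pos, by simp⟩
  have hpos : ∀ w ∈ K, 0 < ‖dslope f 0 w‖ := by
    intro w hw
    rw [norm_pos_iff]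
    rcases eq_or_ne w 0 with rfl | hw0
    · rwa [dslope_same, hd.deriv]
    · intro h
      have := norm_eq_norm_mul_norm_dslope_zero hf0 w
      rw [h, norm_zero, mul_zero, norm_eq_zero] at this
      exact hw0 (hzero w hw this)
  obtain ⟨w₀, hw₀, hmin⟩ :=
    hK.exists_isMinOn hne (continuous_dslope hf hd.differentiableAt).norm.continuousOn
  refine ⟨‖dslope f 0 w₀‖, hpos w₀ hw₀, fun w hw => ?_⟩
  rw [norm_eq_norm_mul_norm_dslope_zero hf0 w, mul_comm]
  exact mul_le_mul_of_nonneg_left (hmin hw) (norm_nonneg w)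

end DSlope

lemma exp_neg_two_pi_I_mul_intCast_add (τ : ℤ) (z : ℂ) :
    cexp (-(2 * π) * I * (τ + z)) = cexp (-(2 * π) * I * z) := by
  rw [show -(2 * π) * I * (τ + z) = -(2 * π) * I * z + ((-τ : ℤ) : ℂ) * (2 * π * I) by
    push_cast; ring]
  exact exp_periodic.int_mul _ _

lemma hasDerivAt_one_sub_exp_neg_two_pi_I_mul :
    HasDerivAt (fun w : ℂ => 1 - cexp (-(2 * π) * I * w)) (2 * π * I) 0 :=
  ((((hasDerivAt_id (0 : ℂ)).const_mul (-(2 * π) * I)).cexp).const_sub 1).congr_deriv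
    (by simp)

lemma one_half_le_norm_one_sub_exp {v : ℂ} (hv : 1 ≤ |v.re|) : 1 / 2 ≤ ‖1 - cexp v‖ := by
  refine le_trans ?_ (abs_norm_sub_norm_le 1 (cexp v))
  rw [norm_one, norm_exp]
  have he : 2 ≤ rexp 1 := by linarith [add_one_le_exp (1 : ℝ)]
  rcases le_abs'.1 hv with hv | hv
  · have : rexp v.re ≤ rexp (-1) := exp_le_exp.2 hv
    rw [Real.exp_neg] at this
    have : (rexp 1)⁻¹ ≤ 1 / 2 := by rw [inv_le_comm₀ (exp_pos 1) (by norm_num)]; linarith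
    rw [abs_of_pos (by linarith)]; linarith
  · have := add_one_le_exp v.re
    rw [abs_of_neg (by linarith)]; linarith

lemma one_half_le_norm_one_sub_exp_neg_two_pi_I_mul {z : ℂ} (hz : 1 ≤ |z.im|) :
    1 / 2 ≤ ‖1 - cexp (-(2 * π) * I * z)‖ := by
  apply one_half_le_norm_one_sub_exp
  have : (-(2 * π) * I * z).re = 2 * π * z.im := by simp
  rw [this, abs_mul, abs_of_pos two_pi_pos]
  nlinarith [pi_gt_three]

lemma exists_pos_mul_norm_le_norm_one_sub_exp :
    ∃ c > 0, ∀ w : ℂ, |w.re| ≤ 1 / 2 → |w.im| ≤ 1 →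
      c * ‖w‖ ≤ ‖1 - cexp (-(2 * π) * I * w)‖ := by
  have hK : IsCompact (Set.Icc (-(1 / 2)) (1 / 2) ×ℂ Set.Icc (-1) 1) :=
    isCompact_Icc.reProdIm isCompact_Icc
  have hzero : ∀ w ∈ Set.Icc (-(1 / 2)) (1 / 2) ×ℂ Set.Icc (-1) 1,
      1 - cexp (-(2 * π) * I * w) = 0 → w = 0 := by
    intro w hw hw0
    obtain ⟨n, hn⟩ := exp_eq_one_iff.1 (sub_eq_zero.1 hw0).symm
    have hwn : w = -n := by
      have : (2 * π * I : ℂ) ≠ 0 := by simp [pi_ne_zero]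
      apply mul_left_cancel₀ this
      linear_combination -hn
    have hre := (mem_reProdIm.1 hw).1
    rw [hwn] at hre ⊢
    simp only [neg_re, intCast_re, Set.mem_Icc] at hre
    have : |(n : ℝ)| < 1 := abs_lt.2 ⟨by linarith, by linarith⟩
    simp [Int.abs_lt_one_iff.1 (by exact_mod_cast this)]
  obtain ⟨c, hc, h⟩ := hK.exists_pos_mul_norm_le (by fun_prop)
    hasDerivAt_one_sub_exp_neg_two_pi_I_mul (by simp [pi_ne_zero]) (by simp) hzero
  exact ⟨c, hc, fun w hre him => h w (mem_reProdIm.2 ⟨abs_le.1 hre, abs_le.1 him⟩)⟩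

lemma exists_pos_norm_one_sub_exp_le_mul_norm :
    ∃ C > 0, ∀ w : ℂ, ‖w‖ ≤ 1 / 2 → ‖1 - cexp (-(2 * π) * I * w)‖ ≤ C * ‖w‖ := by
  obtain ⟨C, hC, h⟩ := (isCompact_closedBall (0 : ℂ) (1 / 2)).exists_pos_norm_le_mul_norm
    (by fun_prop) hasDerivAt_one_sub_exp_neg_two_pi_I_mul.differentiableAt (by simp)
  exact ⟨C, hC, fun w hw => h w (mem_closedBall_zero_iff.2 hw)⟩

lemma exists_int_abs_re_add_le (z : ℂ) :
    ∃ τ : ℤ, |((τ : ℂ) + z).re| ≤ 1 / 2 ∧ |(τ : ℝ)| ≤ ‖z‖ + 1 / 2 := by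
  refine ⟨-round z.re, ?_, ?_⟩
  · have : ((-round z.re : ℤ) + z).re = z.re - round z.re := by simp; ring
    exact this ▸ abs_sub_round z.re
  · have h := abs_sub_abs_le_abs_sub (round z.re : ℝ) z.re
    rw [abs_sub_comm] at h
    rw [Int.cast_neg, abs_neg]
    linarith [abs_sub_round z.re, abs_re_le_norm z]

section Subadditive

variable {ω : ℝ → ℝ}

lemma le_natCast_succ_mul_of_subadditive
    (hsub : ∀ s t : ℝ, 0 ≤ s → 0 ≤ t → ω (s + t) ≤ ω s + ω t) (n : ℕ) {t : ℝ} (ht : 0 ≤ t) :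
    ω ((n + 1) * t) ≤ (n + 1) * ω t := by
  induction n with
  | zero => simp
  | succ n ih =>
    calc ω ((↑(n + 1) + 1) * t) = ω ((n + 1) * t + t) := by push_cast; ring_nf
      _ ≤ ω ((n + 1) * t) + ω t := hsub _ _ (by positivity) ht
      _ ≤ (↑(n + 1) + 1) * ω t := by push_cast; linarith

lemma le_natCast_succ_mul_add_of_subadditive (hmono : Monotone ω)
    (hsub : ∀ s t : ℝ, 0 ≤ s → 0 ≤ t → ω (s + t) ≤ ω s + ω t) (n : ℕ) {t x : ℝ}
    (ht : 0 ≤ t) (hx : x ≤ (n + 1) * t + 1) :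
    ω x ≤ (n + 1) * ω t + ω 1 :=
  calc ω x ≤ ω ((n + 1) * t + 1) := hmono hx
    _ ≤ ω ((n + 1) * t) + ω 1 := hsub _ _ (by positivity) zero_le_one
    _ ≤ (n + 1) * ω t + ω 1 := by
      linarith [le_natCast_succ_mul_of_subadditive hsub n ht]

end Subadditive

lemma norm_sum_intCast_mul_le {ι : Type*} [Fintype ι] (ξ : ι → ℤ) (c : ι → ℂ) :
    ‖∑ j, (ξ j : ℂ) * c j‖ ≤ (∑ j, ‖c j‖) * ∑ j, |(ξ j : ℝ)| := by
  rw [Finset.mul_sum]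
  refine (norm_sum_le _ _).trans (Finset.sum_le_sum fun j _ => ?_)
  rw [norm_mul, norm_intCast, mul_comm]
  gcongr
  exact Finset.single_le_sum (f := fun j => ‖c j‖) (fun _ _ => norm_nonneg _) (Finset.mem_univ j)

section Equivalence

variable {ι : Type*} {ω : ℝ → ℝ} (z : ι → ℂ) (s : ι → ℝ)

theorem exp_lower_bound_of_edc (hmono : Monotone ω) (hnonneg : ∀ t, 0 ≤ ω t)
    (hsub : ∀ s t : ℝ, 0 ≤ s → 0 ≤ t → ω (s + t) ≤ ω s + ω t) {M : ℝ}
    (hz : ∀ i, ‖z i‖ ≤ M * s i) (hs : ∀ i, 0 ≤ s i)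
    (H : ∀ ε > 0, ∃ C > 0, ∀ (τ : ℤ) (i : ι), (τ : ℂ) + z i ≠ 0 →
      C * rexp (-ε * ω (|(τ : ℝ)| + s i)) ≤ ‖(τ : ℂ) + z i‖) :
    ∀ ε > 0, ∃ C > 0, ∀ i, (¬ ∃ k : ℤ, z i = k) →
      C * rexp (-ε * ω (s i)) ≤ ‖1 - cexp (-(2 * π) * I * z i)‖ := by
  intro ε hε
  obtain ⟨c, hc, hrect⟩ := exists_pos_mul_norm_le_norm_one_sub_exp
  set n := ⌈M⌉₊
  set ε₀ := ε / (n + 1)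
  have hε₀ : 0 < ε₀ := by positivity
  obtain ⟨C, hC, hCbound⟩ := H ε₀ hε₀
  refine ⟨min (1 / 2) (c * C * rexp (-ε₀ * ω 1)), by positivity, fun i hi => ?_⟩
  rcases le_or_gt 1 |(z i).im| with him | him
  · have hexp_le : rexp (-ε * ω (s i)) ≤ 1 :=
      Real.exp_le_one_iff.2 (by nlinarith [hnonneg (s i)])
    calc min (1 / 2) (c * C * rexp (-ε₀ * ω 1)) * rexp (-ε * ω (s i)) ≤ 1 / 2 * 1 := by
          gcongr; exact min_le_left _ _
      _ ≤ _ := by linarith [one_half_le_norm_one_sub_exp_neg_two_pi_I_mul him]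
  obtain ⟨τ, hw_re, hτz⟩ := exists_int_abs_re_add_le (z i)
  set w := (τ : ℂ) + z i
  have hw_im : |w.im| ≤ 1 := by simp [w, him.le]
  have hw0 : w ≠ 0 := fun h => hi ⟨-τ, by push_cast; linear_combination h⟩
  have hτ : |(τ : ℝ)| + s i ≤ (n + 1) * s i + 1 := by
    have hM : M * s i ≤ n * s i := mul_le_mul_of_nonneg_right (Nat.le_ceil M) (hs i)
    linarith [hz i]
  have hω := le_natCast_succ_mul_add_of_subadditive hmono hsub n (hs i) hτ
  calc min (1 / 2) (c * C * rexp (-ε₀ * ω 1)) * rexp (-ε * ω (s i))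
      ≤ c * C * rexp (-ε₀ * ω 1) * rexp (-ε * ω (s i)) := by gcongr; exact min_le_right _ _
    _ = c * (C * rexp (-ε₀ * ((n + 1) * ω (s i) + ω 1))) := by
      rw [mul_assoc, ← Real.exp_add, mul_assoc]
      congr 3
      linear_combination ω (s i) * (div_mul_cancel₀ ε (by positivity : (n + 1 : ℝ) ≠ 0))
    _ ≤ c * (C * rexp (-ε₀ * ω (|(τ : ℝ)| + s i))) := by
      gcongr c * (C * ?_)
      exact exp_le_exp.2 (mul_le_mul_of_nonpos_left hω (neg_nonpos.2 hε₀.le))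
    _ ≤ c * ‖w‖ := by gcongr; exact hCbound τ i hw0
    _ ≤ ‖1 - cexp (-(2 * π) * I * w)‖ := hrect w hw_re hw_im
    _ = ‖1 - cexp (-(2 * π) * I * z i)‖ := by rw [exp_neg_two_pi_I_mul_intCast_add]

theorem edc_of_exp_lower_bound (hmono : Monotone ω) (hnonneg : ∀ t, 0 ≤ ω t)
    (H : ∀ ε > 0, ∃ C > 0, ∀ i, (¬ ∃ k : ℤ, z i = k) →
      C * rexp (-ε * ω (s i)) ≤ ‖1 - cexp (-(2 * π) * I * z i)‖) :
    ∀ ε > 0, ∃ C > 0, ∀ (τ : ℤ) (i : ι), (τ : ℂ) + z i ≠ 0 →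
      C * rexp (-ε * ω (|(τ : ℝ)| + s i)) ≤ ‖(τ : ℂ) + z i‖ := by
  intro ε hε
  obtain ⟨B, hB, hup⟩ := exists_pos_norm_one_sub_exp_le_mul_norm
  obtain ⟨C, hC, hbound⟩ := H ε hε
  refine ⟨min (1 / 2) (C / B), by positivity, fun τ i hne => ?_⟩
  set w := (τ : ℂ) + z i
  rcases le_or_gt (1 / 2) ‖w‖ with hw | hw
  · have hexp_le : rexp (-ε * ω (|(τ : ℝ)| + s i)) ≤ 1 :=
      Real.exp_le_one_iff.2 (by nlinarith [hnonneg (|(τ : ℝ)| + s i)])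
    calc min (1 / 2) (C / B) * rexp (-ε * ω (|(τ : ℝ)| + s i)) ≤ 1 / 2 * 1 := by
          gcongr; exact min_le_left _ _
      _ ≤ ‖w‖ := by linarith
  have hz : ¬ ∃ k : ℤ, z i = k := by
    rintro ⟨k, hk⟩
    have hτk : τ + k ≠ 0 := by
      rintro h; apply hne; simp only [w, hk]; exact_mod_cast h
    have : (1 : ℝ) ≤ ‖w‖ := by
      simp only [w, hk]
      exact_mod_cast Int.one_le_abs hτk
    linarith
  calc min (1 / 2) (C / B) * rexp (-ε * ω (|(τ : ℝ)| + s i))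
      ≤ C / B * rexp (-ε * ω (s i)) := by
        gcongr ?_ * ?_
        · exact min_le_right _ _
        exact exp_le_exp.2 (mul_le_mul_of_nonpos_left (hmono (le_add_of_nonneg_left
          (abs_nonneg _))) (neg_nonpos.2 hε.le))
    _ ≤ ‖1 - cexp (-(2 * π) * I * z i)‖ / B := by
        rw [div_mul_eq_mul_div]; gcongr; exact hbound i hz
    _ = ‖1 - cexp (-(2 * π) * I * w)‖ / B := by rw [exp_neg_two_pi_I_mul_intCast_add]
    _ ≤ ‖w‖ := div_le_of_le_mul₀ hB.le (norm_nonneg w) (by linarith [hup w hw.le])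

end Equivalence

theorem stmt13_general (N : ℕ) (α β : Fin N → ℝ) (ω : ℝ → ℝ)
    (hmono : Monotone ω) (hnonneg : ∀ t : ℝ, 0 ≤ ω t)
    (hsub : ∀ s t : ℝ, 0 ≤ s → 0 ≤ t → ω (s + t) ≤ ω s + ω t) :
    (∀ ε > 0, ∃ C > 0, ∀ τ : ℤ, ∀ ξ : Fin N → ℤ,
        ((τ : ℂ) + ∑ j : Fin N, (ξ j : ℂ) * ((α j : ℂ) + Complex.I * (β j : ℂ))) ≠ 0 →
        C * Real.exp (-ε * ω (|(τ : ℝ)| + ∑ j : Fin N, |(ξ j : ℝ)|)) ≤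
          ‖(τ : ℂ) + ∑ j : Fin N, (ξ j : ℂ) * ((α j : ℂ) + Complex.I * (β j : ℂ))‖)
    ↔
    (∀ ε > 0, ∃ C > 0, ∀ ξ : Fin N → ℤ,
        (¬ ∃ k : ℤ, (∑ j : Fin N, (ξ j : ℂ) * ((α j : ℂ) + Complex.I * (β j : ℂ))) = (k : ℂ)) →
        C * Real.exp (-ε * ω (∑ j : Fin N, |(ξ j : ℝ)|)) ≤
          ‖1 - Complex.exp (-(2 * (π : ℂ)) * Complex.I *
            (∑ j : Fin N, (ξ j : ℂ) * ((α j : ℂ) + Complex.I * (β j : ℂ))))‖) :=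
  ⟨exp_lower_bound_of_edc _ _ hmono hnonneg hsub
      (fun ξ => norm_sum_intCast_mul_le ξ _) (fun _ => by positivity),
    edc_of_exp_lower_bound _ _ hmono hnonneg⟩

theorem stmt13 (N : ℕ) (α β : Fin N → ℝ) (ω : ℝ → ℝ)
    (hmono : Monotone ω) (hcont : Continuous ω) (hnonneg : ∀ t : ℝ, 0 ≤ ω t)
    (hsub : ∀ s t : ℝ, 0 ≤ s → 0 ≤ t → ω (s + t) ≤ ω s + ω t)
    (hK : ∃ K : ℝ, ∀ t ≥ (0:ℝ), ω (2 * t) ≤ K * (ω t + 1))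
    (hO : ∃ C > 0, ∀ t ≥ (1:ℝ), ω t ≤ C * t)
    (hlog : ∀ c > 0, ∃ T : ℝ, ∀ t ≥ T, Real.log t ≤ c * ω t) :
    (∀ ε > 0, ∃ C > 0, ∀ τ : ℤ, ∀ ξ : Fin N → ℤ,
        ((τ : ℂ) + ∑ j : Fin N, (ξ j : ℂ) * ((α j : ℂ) + Complex.I * (β j : ℂ))) ≠ 0 →
        C * Real.exp (-ε * ω (|(τ : ℝ)| + ∑ j : Fin N, |(ξ j : ℝ)|)) ≤
          ‖(τ : ℂ) + ∑ j : Fin N, (ξ j : ℂ) * ((α j : ℂ) + Complex.I * (β j : ℂ))‖)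
    ↔
    (∀ ε > 0, ∃ C > 0, ∀ ξ : Fin N → ℤ,
        (¬ ∃ k : ℤ, (∑ j : Fin N, (ξ j : ℂ) * ((α j : ℂ) + Complex.I * (β j : ℂ))) = (k : ℂ)) →
        C * Real.exp (-ε * ω (∑ j : Fin N, |(ξ j : ℝ)|)) ≤
          ‖1 - Complex.exp (-(2 * (π : ℂ)) * Complex.I *
            (∑ j : Fin N, (ξ j : ℂ) * ((α j : ℂ) + Complex.I * (β j : ℂ))))‖) :=
  stmt13_general N α β ω hmono hnonneg hsub
end

section
/- Let a: ℝ → ℂ be continuous and 2π-periodic with ∫₀^{2π} a(r) dr ∈ 2πi·ℤ, and let f be continuous and 2π-periodic with ∫₀^{2π} f(t)·exp(∫₀^{t} a(r)dr) dt = 0. Then u(t) = ∫₀^{t} f(s)·exp(−∫_{s}^{t} a(r)dr) ds defines a 2π-periodic C¹ function satisfying u'(t) + a(t)u(t) = f(t). -/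
open Real

theorem stmt18 (a f : ℝ → ℂ) (hac : Continuous a) (hap : ∀ t, a (t + 2 * π) = a t)
    (hfc : Continuous f) (hfp : ∀ t, f (t + 2 * π) = f t)
    (hmon : ∃ k : ℤ, (∫ r in (0:ℝ)..(2 * π), a r) = 2 * (π : ℂ) * Complex.I * k)
    (hcompat : (∫ t in (0:ℝ)..(2 * π), f t * Complex.exp (∫ r in (0:ℝ)..t, a r)) = 0)
    (u : ℝ → ℂ)
    (hu : u = fun t => ∫ s in (0:ℝ)..t, f s * Complex.exp (-∫ r in s..t, a r)) :
    (∀ t, u (t + 2 * π) = u t) ∧ ∀ t, HasDerivAt u (f t - a t * u t) t := by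
  set A : ℝ → ℂ := fun t => ∫ r in (0:ℝ)..t, a r with hAdef
  have hA : ∀ t, HasDerivAt A (a t) t := fun t =>
    intervalIntegral.integral_hasDerivAt_right (hac.intervalIntegrable _ _)
      (hac.stronglyMeasurableAtFilter _ _) hac.continuousAt
  set g : ℝ → ℂ := fun s => f s * Complex.exp (A s) with hgdef
  have hgc : Continuous g := hfc.mul (Complex.continuous_exp.comp
    (intervalIntegral.continuous_primitive (fun a b => hac.intervalIntegrable a b) 0))
  set F : ℝ → ℂ := fun t => ∫ s in (0:ℝ)..t, g s with hFdef
  have hF : ∀ t, HasDerivAt F (g t) t := fun t =>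
    intervalIntegral.integral_hasDerivAt_right (hgc.intervalIntegrable _ _)
      (hgc.stronglyMeasurableAtFilter _ _) hgc.continuousAt
  -- u = exp(-A) * F
  have hu' : ∀ t, u t = Complex.exp (-A t) * F t := by
    intro t
    rw [hu]
    simp only [hFdef, hgdef]
    rw [← intervalIntegral.integral_const_mul]
    apply intervalIntegral.integral_congr
    intro s hs
    show f s * Complex.exp (-∫ r in s..t, a r) = Complex.exp (-A t) * (f s * Complex.exp (A s))
    have h1 : (∫ r in s..t, a r) = A t - A s := by
      rw [hAdef]
      exact (intervalIntegral.integral_interval_sub_left (hac.intervalIntegrable _ _)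
        (hac.intervalIntegrable _ _)).symm
    rw [h1, neg_sub, Complex.exp_sub, Complex.exp_neg]
    field_simp
  -- A(2π) exponential is 1
  obtain ⟨k, hk⟩ := hmon
  have hexpA2 : Complex.exp (A (2 * π)) = 1 := by
    rw [hAdef]
    simp only
    rw [hk]
    have : 2 * (π : ℂ) * Complex.I * k = k * (2 * π * Complex.I) := by ring
    rw [this, Complex.exp_int_mul_two_pi_mul_I]
  -- A periodicity
  have haper : Function.Periodic a (2 * π) := hap
  have hAper : ∀ t, A (t + 2 * π) = A t + A (2 * π) := by
    intro t
    rw [hAdef]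
    simp only
    rw [← intervalIntegral.integral_add_adjacent_intervals (hac.intervalIntegrable 0 t)
      (hac.intervalIntegrable t (t + 2 * π))]
    congr 1
    rw [haper.intervalIntegral_add_eq t 0, zero_add]
  -- g periodicity
  have hgper : Function.Periodic g (2 * π) := by
    intro s
    simp only [hgdef, hfp s, hAper s, Complex.exp_add, hexpA2, mul_one]
  -- F periodicity
  have hFper : ∀ t, F (t + 2 * π) = F t := by
    intro t
    rw [hFdef]
    simp only
    rw [← intervalIntegral.integral_add_adjacent_intervals (hgc.intervalIntegrable 0 t)
      (hgc.intervalIntegrable t (t + 2 * π))]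
    have h2 : (∫ s in t..t + 2 * π, g s) = ∫ s in (0:ℝ)..(0 + 2 * π), g s :=
      hgper.intervalIntegral_add_eq t 0
    rw [h2, zero_add]
    have h3 : (∫ s in (0:ℝ)..(2 * π), g s) = 0 := hcompat
    rw [h3, add_zero]
  constructor
  · intro t
    have h4 : Complex.exp (-A (2 * π)) = 1 := by rw [Complex.exp_neg, hexpA2, inv_one]
    rw [hu', hu', hAper, hFper, neg_add, Complex.exp_add, h4, mul_one]
  · intro t
    have huv : u = fun t => Complex.exp (-A t) * F t := funext hu'
    rw [huv]
    have hd : HasDerivAt (fun t => Complex.exp (-A t) * F t)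
        (Complex.exp (-A t) * (-a t) * F t + Complex.exp (-A t) * g t) t :=
      (((hA t).neg).cexp).mul (hF t)
    convert hd using 1
    have hexp : Complex.exp (-A t) * Complex.exp (A t) = 1 := by
      rw [← Complex.exp_add, neg_add_cancel, Complex.exp_zero]
    show f t - a t * (Complex.exp (-A t) * F t) = _
    have h5 : g t = f t * Complex.exp (A t) := rfl
    rw [h5]
    linear_combination -f t * hexp
end
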